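/- Let $d \ge 1$ and let $h_1, \dots, h_d > 0$. Define $\psi_k(x) = \prod_{i=1}^d \chi(x_i/h_i - k_i)$ for $k \in \mathbb{Z}^d$, where $\chi(t) = \max(0,1-|t|)$, so that $\|\psi_k\|_{L^1} = \prod_i h_i$. Define the operator $K$ by $(Ku)(x) = \sum_{k \in \mathbb{Z}^d} \psi_k(x) \, \|\psi_k\|_{L^1}^{-1} \int_{\mathbb{R}^d} \psi_k(y) u(y)\, dy$. Then for every $p \in [1, \infty]$ and every $u \in L^p(\mathbb{R}^d)$, $Ku \in L^p(\mathbb{R}^d)$ and $\|Ku\|_p \le \|u\|_p$. -/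

import Mathlib

/-!
The hats `ψ_k` form a partition of unity and `‖ψ_k‖₁⁻¹ ∫ ψ_k u` is the mean of `u` against the
probability density `ψ_k / ‖ψ_k‖₁`. Hence `|Ku(x)|` is at most a convex combination, with weights
`ψ_k(x)`, of means of `|u|`. Jensen's inequality, applied once to the convex combination and once
to each mean, gives `|Ku(x)|^p ≤ ∑_k ψ_k(x) ‖ψ_k‖₁⁻¹ ∫ ψ_k |u|^p`, and integrating in `x`
returns `∫ |u|^p`. For `p = ∞` every mean is bounded by `ess sup |u|`. Finally, `Ku` is
continuous because the supports of the `ψ_k` are locally finite.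
-/

open BigOperators MeasureTheory ENNReal

/-- The canonical hat function on `ℝ`, centered at `0` with support `[-1,1]`. -/
noncomputable def chi (t : ℝ) : ℝ := max 0 (1 - |t|)

theorem chi_nonneg (t : ℝ) : 0 ≤ chi t := le_max_left _ _

theorem continuous_chi : Continuous chi :=
  continuous_const.max (continuous_const.sub continuous_abs)

theorem abs_lt_one_of_chi_ne_zero {t : ℝ} (h : chi t ≠ 0) : |t| < 1 := by
  by_contra! ht
  exact h (max_eq_left (by linarith))

theorem eq_floor_or_eq_floor_add_one_of_chi_sub_ne_zero {t : ℝ} {n : ℤ} (h : chi (t - n) ≠ 0) :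
    n = ⌊t⌋ ∨ n = ⌊t⌋ + 1 := by
  obtain ⟨h₁, h₂⟩ := abs_lt.1 (abs_lt_one_of_chi_ne_zero h)
  have hlo : ⌊t⌋ < n + 1 := Int.floor_lt.2 (by push_cast; linarith)
  have hhi : n - 1 ≤ ⌊t⌋ := Int.le_floor.2 (by push_cast; linarith)
  omega

theorem chi_sub_floor_add_chi_sub_floor_add_one (t : ℝ) :
    chi (t - ⌊t⌋) + chi (t - (⌊t⌋ + 1 : ℤ)) = 1 := by
  have h₁ := Int.floor_le t
  have h₂ := Int.lt_floor_add_one t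
  rw [chi, chi, abs_of_nonneg (by linarith), Int.cast_add, Int.cast_one,
    abs_of_nonpos (by linarith), max_eq_right (by linarith), max_eq_right (by linarith)]
  ring

theorem integral_chi : ∫ t, chi t = 1 := by
  have hvanish : ∀ t ∈ Set.Ioi (0 : ℝ) \ Set.Ioc 0 1, max 0 (1 - t) = 0 := by
    rintro t ⟨ht0, ht1⟩
    exact max_eq_left (by linarith [not_le.1 fun h1 => ht1 ⟨ht0, h1⟩])
  have hlin : ∀ t ∈ Set.uIcc (0 : ℝ) 1, max 0 (1 - t) = 1 - t := fun t ht =>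
    max_eq_right (by rw [Set.uIcc_of_le zero_le_one] at ht; linarith [ht.2])
  calc ∫ t, chi t = 2 * ∫ t in Set.Ioi 0, max 0 (1 - t) :=
        integral_comp_abs (f := fun s => max 0 (1 - s))
    _ = 2 * ∫ t in (0 : ℝ)..1, (1 - t) := by
        rw [setIntegral_eq_of_subset_of_forall_sdiff_eq_zero measurableSet_Ioi
          Set.Ioc_subset_Ioi_self hvanish, ← intervalIntegral.integral_of_le zero_le_one,
          intervalIntegral.integral_congr hlin]
    _ = 1 := by
        rw [intervalIntegral.integral_sub intervalIntegrable_const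
          intervalIntegral.intervalIntegrable_id]
        norm_num

theorem integral_chi_div_sub {h : ℝ} (hh : 0 < h) (c : ℝ) : ∫ t, chi (t / h - c) = h := by
  rw [Measure.integral_comp_div (fun s => chi (s - c)), integral_sub_right_eq_self chi c,
    integral_chi, abs_of_pos hh, smul_eq_mul, mul_one]

section Averaging

variable {α ι : Type*} [MeasurableSpace α] {μ : Measure α}

theorem lintegral_mul_rpow_le {w f : α → ℝ≥0∞} (hw : AEMeasurable w μ) (hf : AEMeasurable f μ)
    {q : ℝ} (hq : 1 ≤ q) :
    (∫⁻ a, w a * f a ∂μ) ^ q ≤ (∫⁻ a, w a ∂μ) ^ (q - 1) * ∫⁻ a, w a * f a ^ q ∂μ := by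
  rcases hq.eq_or_lt with rfl | hq
  · simp
  have hdens : ∀ g : α → ℝ≥0∞, AEMeasurable g μ →
      ∫⁻ a, g a ∂μ.withDensity w = ∫⁻ a, w a * g a ∂μ :=
    fun g hg => lintegral_withDensity_eq_lintegral_mul₀ hw hg
  have hq' := (Real.HolderConjugate.conjExponent hq).symm
  -- Hölder for the functions `1` and `f` against the measure `w μ`
  have holder := ENNReal.lintegral_mul_le_Lp_mul_Lq (μ.withDensity w) hq'
    (aemeasurable_const (b := (1 : ℝ≥0∞))) (hf.mono_ac (withDensity_absolutelyContinuous μ w))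
  simp only [Pi.mul_apply, one_mul, ENNReal.one_rpow] at holder
  rw [hdens f hf, hdens _ (hf.pow_const q), hdens (fun _ => 1) aemeasurable_const] at holder
  simp only [mul_one] at holder
  have hq0 : 0 ≤ q := by linarith
  calc (∫⁻ a, w a * f a ∂μ) ^ q
      ≤ ((∫⁻ a, w a ∂μ) ^ (1 / q.conjExponent) * (∫⁻ a, w a * f a ^ q ∂μ) ^ (1 / q)) ^ q :=
        ENNReal.rpow_le_rpow holder hq0
    _ = (∫⁻ a, w a ∂μ) ^ (q - 1) * ∫⁻ a, w a * f a ^ q ∂μ := by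
        rw [ENNReal.mul_rpow_of_nonneg _ _ hq0, ← ENNReal.rpow_mul, ← ENNReal.rpow_mul,
          one_div_mul_cancel (by linarith), ENNReal.rpow_one, Real.conjExponent]
        congr 2
        field_simp

theorem tsum_mul_rpow_le {w a : ι → ℝ≥0∞} (hw : ∑' k, w k = 1) {q : ℝ} (hq : 1 ≤ q) :
    (∑' k, w k * a k) ^ q ≤ ∑' k, w k * a k ^ q := by
  let _ : MeasurableSpace ι := ⊤
  have : MeasurableSingletonClass ι := ⟨fun _ => trivial⟩
  simpa [lintegral_count, hw] using
    lintegral_mul_rpow_le (μ := Measure.count) (w := w) (f := a) measurable_from_top.aemeasurable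
      measurable_from_top.aemeasurable hq

theorem lintegral_mul_rpow_average_le {w f : α → ℝ≥0∞} (hw : AEMeasurable w μ)
    (hf : AEMeasurable f μ) (hw0 : ∫⁻ a, w a ∂μ ≠ 0) (hwtop : ∫⁻ a, w a ∂μ ≠ ⊤)
    {q : ℝ} (hq : 1 ≤ q) :
    (∫⁻ a, w a ∂μ) * ((∫⁻ a, w a ∂μ)⁻¹ * ∫⁻ a, w a * f a ∂μ) ^ q ≤ ∫⁻ a, w a * f a ^ q ∂μ := by
  set H := ∫⁻ a, w a ∂μ
  have hpow : H * H⁻¹ ^ q * H ^ (q - 1) = 1 := by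
    rw [ENNReal.inv_rpow, ← ENNReal.rpow_neg, mul_assoc, ← ENNReal.rpow_add _ _ hw0 hwtop,
      show -q + (q - 1) = -1 by ring, ENNReal.rpow_neg_one, ENNReal.mul_inv_cancel hw0 hwtop]
  calc H * (H⁻¹ * ∫⁻ a, w a * f a ∂μ) ^ q
      = H * H⁻¹ ^ q * (∫⁻ a, w a * f a ∂μ) ^ q := by
        rw [ENNReal.mul_rpow_of_nonneg _ _ (by linarith), mul_assoc]
    _ ≤ H * H⁻¹ ^ q * (H ^ (q - 1) * ∫⁻ a, w a * f a ^ q ∂μ) := by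
        gcongr
        exact lintegral_mul_rpow_le hw hf hq
    _ = ∫⁻ a, w a * f a ^ q ∂μ := by rw [← mul_assoc, hpow, one_mul]

noncomputable def partitionAverage (μ : Measure α) (w : ι → α → ℝ≥0∞) (f : α → ℝ≥0∞)
    (x : α) : ℝ≥0∞ :=
  ∑' k, w k x * ((∫⁻ y, w k y ∂μ)⁻¹ * ∫⁻ y, w k y * f y ∂μ)

variable {w : ι → α → ℝ≥0∞} {f : α → ℝ≥0∞}

theorem lintegral_partitionAverage_rpow_le [Countable ι] (hw : ∀ k, AEMeasurable (w k) μ)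
    (hsum : ∀ x, ∑' k, w k x = 1) (hw0 : ∀ k, ∫⁻ y, w k y ∂μ ≠ 0)
    (hwtop : ∀ k, ∫⁻ y, w k y ∂μ ≠ ⊤) (hf : AEMeasurable f μ) {q : ℝ} (hq : 1 ≤ q) :
    ∫⁻ x, partitionAverage μ w f x ^ q ∂μ ≤ ∫⁻ x, f x ^ q ∂μ := by
  set c : ι → ℝ≥0∞ := fun k => (∫⁻ y, w k y ∂μ)⁻¹ * ∫⁻ y, w k y * f y ∂μ
  calc ∫⁻ x, partitionAverage μ w f x ^ q ∂μ
      ≤ ∫⁻ x, ∑' k, w k x * c k ^ q ∂μ := lintegral_mono fun x => tsum_mul_rpow_le (hsum x) hq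
    _ = ∑' k, (∫⁻ y, w k y ∂μ) * c k ^ q := by
        rw [lintegral_tsum fun k => (hw k).mul_const _]
        exact tsum_congr fun k => lintegral_mul_const'' _ (hw k)
    _ ≤ ∑' k, ∫⁻ x, w k x * f x ^ q ∂μ :=
        ENNReal.tsum_le_tsum fun k => lintegral_mul_rpow_average_le (hw k) hf (hw0 k) (hwtop k) hq
    _ = ∫⁻ x, f x ^ q ∂μ := by
        rw [← lintegral_tsum (f := fun k x => w k x * f x ^ q) fun k => (hw k).mul (hf.pow_const q)]
        simp only [ENNReal.tsum_mul_right, hsum, one_mul]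

theorem partitionAverage_le_essSup (hw : ∀ k, AEMeasurable (w k) μ)
    (hsum : ∀ x, ∑' k, w k x = 1) (hw0 : ∀ k, ∫⁻ y, w k y ∂μ ≠ 0)
    (hwtop : ∀ k, ∫⁻ y, w k y ∂μ ≠ ⊤) (x : α) :
    partitionAverage μ w f x ≤ essSup f μ := by
  have haverage : ∀ k, (∫⁻ y, w k y ∂μ)⁻¹ * ∫⁻ y, w k y * f y ∂μ ≤ essSup f μ := fun k =>
    calc (∫⁻ y, w k y ∂μ)⁻¹ * ∫⁻ y, w k y * f y ∂μ
        ≤ (∫⁻ y, w k y ∂μ)⁻¹ * ∫⁻ y, w k y * essSup f μ ∂μ := by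
          gcongr _ * ?_
          exact lintegral_mono_ae ((ae_le_essSup f).mono fun y hy => by gcongr)
      _ = essSup f μ := by
          rw [lintegral_mul_const'' _ (hw k), ← mul_assoc, ENNReal.inv_mul_cancel (hw0 k) (hwtop k),
            one_mul]
  calc partitionAverage μ w f x ≤ ∑' k, w k x * essSup f μ :=
        ENNReal.tsum_le_tsum fun k => by gcongr; exact haverage k
    _ = essSup f μ := by rw [ENNReal.tsum_mul_right, hsum, one_mul]

theorem eLpNorm_le_of_enorm_le_partitionAverage [Countable ι] {E F : Type*} [NormedAddCommGroup E]
    [NormedAddCommGroup F] {g : α → E} {u : α → F} (hw : ∀ k, AEMeasurable (w k) μ)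
    (hsum : ∀ x, ∑' k, w k x = 1) (hw0 : ∀ k, ∫⁻ y, w k y ∂μ ≠ 0)
    (hwtop : ∀ k, ∫⁻ y, w k y ∂μ ≠ ⊤) (hu : AEStronglyMeasurable u μ)
    (hg : ∀ x, ‖g x‖ₑ ≤ partitionAverage μ w (fun y => ‖u y‖ₑ) x) {p : ℝ≥0∞} (hp : 1 ≤ p) :
    eLpNorm g p μ ≤ eLpNorm u p μ := by
  rcases eq_or_ne p ⊤ with rfl | hptop
  · rw [eLpNorm_exponent_top, eLpNorm_exponent_top]
    exact essSup_le_of_ae_le _ (.of_forall fun x =>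
      (hg x).trans (partitionAverage_le_essSup hw hsum hw0 hwtop x))
  have hp0 : p ≠ 0 := (zero_lt_one.trans_le hp).ne'
  have hq : 1 ≤ p.toReal := by
    simpa using ENNReal.toReal_mono hptop hp
  rw [eLpNorm_eq_lintegral_rpow_enorm_toReal hp0 hptop,
    eLpNorm_eq_lintegral_rpow_enorm_toReal hp0 hptop]
  gcongr ?_ ^ _
  calc ∫⁻ x, ‖g x‖ₑ ^ p.toReal ∂μ
      ≤ ∫⁻ x, partitionAverage μ w (fun y => ‖u y‖ₑ) x ^ p.toReal ∂μ := by
        gcongr with x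
        exact hg x
    _ ≤ ∫⁻ x, ‖u x‖ₑ ^ p.toReal ∂μ :=
        lintegral_partitionAverage_rpow_le hw hsum hw0 hwtop hu.enorm hq

end Averaging

theorem locallyFinite_ball_intCast {ι : Type*} [Fintype ι] :
    LocallyFinite fun k : ι → ℤ => Metric.ball (fun i => (k i : ℝ)) 1 := by
  intro y
  have hcast : Filter.Tendsto (fun (k : ι → ℤ) i => (k i : ℝ)) Filter.cofinite
      (Filter.cocompact _) := by
    have := Filter.Tendsto.pi_map_coprodᵢ (ι := ι) fun _ => Int.tendsto_coe_cofinite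
    rwa [Filter.coprodᵢ_cofinite, Filter.coprodᵢ_cocompact] at this
  refine ⟨Metric.ball y 1, Metric.ball_mem_nhds y one_pos,
    (tendsto_cofinite_cocompact_iff.1 hcast _ (isCompact_closedBall y 2)).subset ?_⟩
  rintro k ⟨z, hzk, hzy⟩
  rw [Metric.mem_ball] at hzk hzy
  rw [Set.mem_preimage, Metric.mem_closedBall]
  linarith [dist_triangle (fun i => (k i : ℝ)) z y, dist_comm z (fun i => (k i : ℝ))]

section Hat

variable {ι : Type*} [Fintype ι] {h : ι → ℝ}

noncomputable def hat (h : ι → ℝ) (k : ι → ℤ) (x : ι → ℝ) : ℝ :=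
  ∏ i, chi (x i / h i - k i)

noncomputable def hatAverage (h : ι → ℝ) (u : (ι → ℝ) → ℝ) (x : ι → ℝ) : ℝ :=
  ∑ᶠ k, hat h k x * (∏ i, h i)⁻¹ * ∫ y, hat h k y * u y

theorem hat_nonneg (k : ι → ℤ) (x : ι → ℝ) : 0 ≤ hat h k x :=
  Finset.prod_nonneg fun _ _ => chi_nonneg _

theorem continuous_hat (k : ι → ℤ) : Continuous (hat h k) :=
  continuous_finsetProd _ fun i _ =>
    continuous_chi.comp (((continuous_apply i).div_const _).sub continuous_const)

theorem integral_hat (hpos : ∀ i, 0 < h i) (k : ι → ℤ) : ∫ x, hat h k x = ∏ i, h i := by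
  refine (integral_fintype_prod_volume_eq_prod (fun i t => chi (t / h i - k i))).trans ?_
  exact Finset.prod_congr rfl fun i _ => integral_chi_div_sub (hpos i) _

theorem lintegral_ofReal_hat (hpos : ∀ i, 0 < h i) (k : ι → ℤ) :
    ∫⁻ x, ENNReal.ofReal (hat h k x) = ENNReal.ofReal (∏ i, h i) := by
  have hint : Integrable (hat h k) := by
    refine .of_integral_ne_zero ?_
    rw [integral_hat hpos]
    exact (Finset.prod_pos fun i _ => hpos i).ne'
  rw [← integral_hat hpos k, ofReal_integral_eq_lintegral_ofReal hint (.of_forall (hat_nonneg k))]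

theorem support_hat_subset (k : ι → ℤ) :
    Function.support (hat h k) ⊆
      (fun x i => x i / h i) ⁻¹' Metric.ball (fun i => (k i : ℝ)) 1 := by
  intro x hx
  rw [Set.mem_preimage, Metric.mem_ball, dist_pi_lt_iff one_pos]
  intro i
  rw [Real.dist_eq]
  exact abs_lt_one_of_chi_ne_zero (Finset.prod_ne_zero_iff.1 hx i (Finset.mem_univ i))

theorem locallyFinite_support_hat : LocallyFinite fun k => Function.support (hat h k) := by
  have hscale : Continuous fun (x : ι → ℝ) i => x i / h i := by fun_prop
  exact (locallyFinite_ball_intCast.preimage_continuous hscale).subset support_hat_subset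

noncomputable def hatIndices [DecidableEq ι] (h : ι → ℝ) (x : ι → ℝ) : Finset (ι → ℤ) :=
  Fintype.piFinset fun i => {⌊x i / h i⌋, ⌊x i / h i⌋ + 1}

theorem mem_hatIndices_of_hat_ne_zero [DecidableEq ι] {k : ι → ℤ} {x : ι → ℝ}
    (hk : hat h k x ≠ 0) : k ∈ hatIndices h x :=
  Fintype.mem_piFinset.2 fun i => by
    simpa only [Finset.mem_insert, Finset.mem_singleton] using
      eq_floor_or_eq_floor_add_one_of_chi_sub_ne_zero
        (Finset.prod_ne_zero_iff.1 hk i (Finset.mem_univ i))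

theorem sum_hatIndices_hat [DecidableEq ι] (x : ι → ℝ) :
    ∑ k ∈ hatIndices h x, hat h k x = 1 := by
  simp only [hatIndices, hat]
  rw [← Finset.prod_univ_sum _ fun i (n : ℤ) => chi (x i / h i - n)]
  refine Finset.prod_eq_one fun i _ => ?_
  rw [Finset.sum_pair (by omega)]
  exact chi_sub_floor_add_chi_sub_floor_add_one _

theorem tsum_ofReal_hat (x : ι → ℝ) : ∑' k, ENNReal.ofReal (hat h k x) = 1 := by
  classical
  rw [tsum_eq_sum (s := hatIndices h x), ← ENNReal.ofReal_sum_of_nonneg fun k _ => hat_nonneg k x,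
    sum_hatIndices_hat, ENNReal.ofReal_one]
  intro k hk
  have hzero : hat h k x = 0 := by_contra fun hne => hk (mem_hatIndices_of_hat_ne_zero hne)
  rw [hzero, ENNReal.ofReal_zero]

theorem continuous_hatAverage (u : (ι → ℝ) → ℝ) : Continuous (hatAverage h u) :=
  continuous_finsum (fun k => ((continuous_hat k).mul continuous_const).mul continuous_const)
    (locallyFinite_support_hat.subset fun _ =>
      (Function.support_mul_subset_left _ _).trans (Function.support_mul_subset_left _ _))

theorem enorm_hatAverage_le (hpos : ∀ i, 0 < h i) (u : (ι → ℝ) → ℝ) (x : ι → ℝ) :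
    ‖hatAverage h u x‖ₑ ≤
      partitionAverage volume (fun k y => ENNReal.ofReal (hat h k y)) (fun y => ‖u y‖ₑ) x := by
  classical
  have hH : 0 < ∏ i, h i := Finset.prod_pos fun i _ => hpos i
  have hfin : (Function.support fun k =>
      hat h k x * (∏ i, h i)⁻¹ * ∫ y, hat h k y * u y).Finite :=
    (hatIndices h x).finite_toSet.subset fun k hk =>
      mem_hatIndices_of_hat_ne_zero (left_ne_zero_of_mul (left_ne_zero_of_mul hk))
  rw [hatAverage, ← tsum_eq_finsum (L := .unconditional _) hfin]
  refine enorm_tsum_le_tsum_enorm.trans (ENNReal.tsum_le_tsum fun k => ?_)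
  rw [lintegral_ofReal_hat hpos, enorm_mul, enorm_mul, Real.enorm_eq_ofReal (hat_nonneg k x),
    Real.enorm_eq_ofReal (inv_nonneg.2 hH.le), ENNReal.ofReal_inv_of_pos hH, mul_assoc]
  gcongr
  calc ‖∫ y, hat h k y * u y‖ₑ ≤ ∫⁻ y, ‖hat h k y * u y‖ₑ := enorm_integral_le_lintegral_enorm _
    _ = ∫⁻ y, ENNReal.ofReal (hat h k y) * ‖u y‖ₑ := by
        simp_rw [enorm_mul, Real.enorm_eq_ofReal (hat_nonneg k _)]

theorem eLpNorm_hatAverage_le (hpos : ∀ i, 0 < h i) {u : (ι → ℝ) → ℝ}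
    (hu : AEStronglyMeasurable u) {p : ℝ≥0∞} (hp : 1 ≤ p) :
    eLpNorm (hatAverage h u) p volume ≤ eLpNorm u p volume := by
  have hmass : ∀ k, ∫⁻ x, ENNReal.ofReal (hat h k x) = ENNReal.ofReal (∏ i, h i) :=
    lintegral_ofReal_hat hpos
  refine eLpNorm_le_of_enorm_le_partitionAverage
    (fun k => (continuous_hat k).measurable.ennreal_ofReal.aemeasurable) tsum_ofReal_hat
    (fun k => ?_) (fun k => hmass k ▸ ENNReal.ofReal_ne_top) hu (enorm_hatAverage_le hpos u) hp
  rw [hmass]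
  exact (ENNReal.ofReal_pos.2 (Finset.prod_pos fun i _ => hpos i)).ne'

end Hat

theorem stmt15_general (d : ℕ)
    (hstep : Fin d → ℝ) (hpos : ∀ i, 0 < hstep i)
    (ψ : (Fin d → ℤ) → (Fin d → ℝ) → ℝ)
    (hψ : ∀ k x, ψ k x = ∏ i : Fin d, chi (x i / hstep i - (k i : ℝ)))
    (K : ((Fin d → ℝ) → ℝ) → (Fin d → ℝ) → ℝ)
    (hK : ∀ u x, K u x = ∑ᶠ k : Fin d → ℤ,
        ψ k x * (∏ i : Fin d, hstep i)⁻¹ * ∫ y : Fin d → ℝ, ψ k y * u y)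
    (p : ℝ≥0∞) (hp : 1 ≤ p)
    (u : (Fin d → ℝ) → ℝ) (hu : MemLp u p volume) :
    MemLp (K u) p volume ∧ eLpNorm (K u) p volume ≤ eLpNorm u p volume := by
  obtain rfl : ψ = hat hstep := funext fun k => funext (hψ k)
  obtain rfl : K = hatAverage hstep := funext fun v => funext (hK v)
  have hle := eLpNorm_hatAverage_le hpos hu.1 hp
  exact ⟨⟨(continuous_hatAverage u).aestronglyMeasurable, hle.trans_lt hu.2⟩, hle⟩

/-- The hat-kernel operator
`(Ku)(x) = ∑_k ψ_k(x) ‖ψ_k‖₁⁻¹ ∫ ψ_k u`, where `ψ_k(x) = ∏ᵢ χ(xᵢ/hᵢ - kᵢ)` and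
`‖ψ_k‖₁ = ∏ᵢ hᵢ`, is a contraction on `L^p(ℝ^d)` for every `p ∈ [1, ∞]`. -/
theorem stmt15 (d : ℕ) (hd : 1 ≤ d)
    (hstep : Fin d → ℝ) (hpos : ∀ i, 0 < hstep i)
    (ψ : (Fin d → ℤ) → (Fin d → ℝ) → ℝ)
    (hψ : ∀ k x, ψ k x = ∏ i : Fin d, chi (x i / hstep i - (k i : ℝ)))
    (K : ((Fin d → ℝ) → ℝ) → (Fin d → ℝ) → ℝ)
    (hK : ∀ u x, K u x = ∑ᶠ k : Fin d → ℤ,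
        ψ k x * (∏ i : Fin d, hstep i)⁻¹ * ∫ y : Fin d → ℝ, ψ k y * u y)
    (p : ℝ≥0∞) (hp : 1 ≤ p)
    (u : (Fin d → ℝ) → ℝ) (hu : MemLp u p volume) :
    MemLp (K u) p volume ∧ eLpNorm (K u) p volume ≤ eLpNorm u p volume :=
  stmt15_general d hstep hpos ψ hψ K hK p hp u hu
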